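/- For the dynamic vertex cover problem, the (1+1) EA using the edge-based representation and fitness function f_e, starting from a search point that is a maximal matching (hence a 2-approximate vertex cover) of the instance before the change, finds a maximal matching, inducing a 2-approximate vertex cover of the new instance, in expected time O(m) after a dynamic addition of an edge, and in expected time O(m log m) after a dynamic deletion of an edge. -/

import Mathlib

/-!
While the current search point is a matching, the penalty weights of `f_e` make the (1+1) EA
reject every offspring that is not a matching or that leaves more edges uncovered, so the
number `u` of uncovered edges never increases. Adding the bit of any of the `u` uncovered edges
keeps a matching, lowers `u` and raises `|V_C|` by at most two, so it is accepted; flipping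
exactly that bit has probability at least `1/(4m)`. By the fitness-level method the expected
time to reach `u = 0`, i.e. a maximal matching, is at most `4m · H_u`. Adding an edge to the
graph leaves `u ≤ 1`, deleting an edge of the matching leaves a matching with `u ≤ m`, hence the
bounds `O(m)` and `O(m log m)`. Finally, a vertex cover must contain a distinct vertex of each
edge of a matching, while a maximal matching `M` induces a cover of `2|M|` vertices.
-/

open scoped ENNReal
open Classical

noncomputable section

/-- Probability that the Markov chain with transition kernel `K`, started at `x`,
has not visited the target set `A` during the time steps `0, 1, …, t`. -/
def survive {S : Type*} (K : S → S → ℝ≥0∞) (A : S → Prop) : ℕ → S → ℝ≥0∞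
  | 0, x => if A x then 0 else 1
  | t + 1, x => if A x then 0 else ∑' y, K x y * survive K A t y

/-- Expected hitting time of the set `A` for the Markov chain with kernel `K` started at `x`,
computed as `∑_{t ≥ 0} Pr(T > t)`. -/
def hitTime {S : Type*} (K : S → S → ℝ≥0∞) (A : S → Prop) (x : S) : ℝ≥0∞ :=
  ∑' t, survive K A t x

/-- One step of a (1+1)-type algorithm: an offspring `z` is sampled from the mutation
distribution `pm x ·`; it replaces `x` iff `accept x z` holds. -/
def eaKernel {S : Type*} (pm : S → S → ℝ≥0∞) (accept : S → S → Prop) (x y : S) : ℝ≥0∞ :=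
  ∑' z, if (if accept x z then z else x) = y then pm x z else 0

/-- The number of one-bits of a bit string. -/
def ones {n : ℕ} (x : Fin n → Bool) : ℕ := (Finset.univ.filter fun i => x i = true).card

/-- Standard bit mutation: each of the `n` bits is flipped independently with probability `1/n`. -/
def pmutEA (n : ℕ) (x y : Fin n → Bool) : ℝ≥0∞ :=
  ((n : ℝ≥0∞)⁻¹) ^ hammingDist x y * (1 - (n : ℝ≥0∞)⁻¹) ^ (n - hammingDist x y)

/-- RLS mutation: exactly one bit, chosen uniformly at random, is flipped. -/
def pmutRLS (n : ℕ) (x y : Fin n → Bool) : ℝ≥0∞ :=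
  if hammingDist x y = 1 then (n : ℝ≥0∞)⁻¹ else 0

/-- Standard bit mutation on bit strings indexed by an arbitrary finite type:
each position is flipped independently with probability `1/m` where `m` is the
number of positions. -/
def pmutEAg {α : Type*} [Fintype α] [DecidableEq α] (x y : α → Bool) : ℝ≥0∞ :=
  ((Fintype.card α : ℝ≥0∞)⁻¹) ^ hammingDist x y *
    (1 - (Fintype.card α : ℝ≥0∞)⁻¹) ^ (Fintype.card α - hammingDist x y)

/-- RLS mutation on bit strings indexed by an arbitrary finite type:
exactly one position, chosen uniformly at random, is flipped. -/
def pmutRLSg {α : Type*} [Fintype α] [DecidableEq α] (x y : α → Bool) : ℝ≥0∞ :=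
  if hammingDist x y = 1 then (Fintype.card α : ℝ≥0∞)⁻¹ else 0

variable {V : Type} [Fintype V] [DecidableEq V]

/-- The set `E(x)` of edges chosen by the search point `x` in the edge-based representation. -/
def chosenE (G : SimpleGraph V) [DecidableRel G.Adj] (x : G.edgeFinset → Bool) :
    Finset (Sym2 V) :=
  (Finset.univ.filter fun e : G.edgeFinset => x e = true).image Subtype.val

/-- The cover set `V_C(x)`: all vertices adjacent to at least one chosen edge. -/
def coverSet (G : SimpleGraph V) [DecidableRel G.Adj] (x : G.edgeFinset → Bool) : Finset V :=
  Finset.univ.filter fun v => ∃ e ∈ chosenE G x, v ∈ e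

/-- The fitness function `f_e` of the edge-based approach (to be minimized). -/
def fVC (G : SimpleGraph V) [DecidableRel G.Adj] (x : G.edgeFinset → Bool) : ℕ :=
  (coverSet G x).card +
    (Fintype.card V + 1) *
      (G.edgeFinset.filter fun e => ¬∃ v ∈ coverSet G x, v ∈ e).card +
    (Fintype.card V + 1) * (G.edgeFinset.card + 1) *
      ((chosenE G x ×ˢ chosenE G x).filter fun p =>
        p.1 ≠ p.2 ∧ ∃ v : V, v ∈ p.1 ∧ v ∈ p.2).card

/-- A set of edges is a matching if no two distinct edges of it share a vertex. -/
def IsMatchingSet (s : Finset (Sym2 V)) : Prop :=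
  ∀ e ∈ s, ∀ e' ∈ s, e ≠ e' → ∀ v : V, ¬(v ∈ e ∧ v ∈ e')

/-- `s` is a maximal matching of `G`: a matching consisting of edges of `G` such that every
edge of `G` shares a vertex with some edge of `s`. -/
def IsMaximalMatchingOf (G : SimpleGraph V) [DecidableRel G.Adj]
    (s : Finset (Sym2 V)) : Prop :=
  s ⊆ G.edgeFinset ∧ IsMatchingSet s ∧
    ∀ e ∈ G.edgeFinset, ∃ e' ∈ s, ∃ v : V, v ∈ e ∧ v ∈ e'

/-- `C` is a vertex cover of `G`. -/
def IsVertexCover (G : SimpleGraph V) [DecidableRel G.Adj] (C : Finset V) : Prop :=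
  ∀ e ∈ G.edgeFinset, ∃ v ∈ C, v ∈ e

open scoped Finset

section FitnessLevels

variable {S : Type*} {K : S → S → ℝ≥0∞} {A : S → Prop} {x : S}

theorem survive_succ_of_not (hA : ¬A x) (t : ℕ) :
    survive K A (t + 1) x = ∑' y, K x y * survive K A t y := by
  simp [survive, hA]

theorem sum_range_succ_survive_of_not (hA : ¬A x) (T : ℕ) :
    ∑ t ∈ Finset.range (T + 1), survive K A t x =
      1 + ∑' y, K x y * ∑ t ∈ Finset.range T, survive K A t y := by
  simp only [Finset.sum_range_succ', survive_succ_of_not hA, Finset.mul_sum]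
  rw [Summable.tsum_finsetSum fun _ _ => ENNReal.summable, add_comm]
  simp [survive, hA]

/-- One level of the fitness-level bound: leaving level `u` costs one step and, with probability
`q ≥ p`, moves to a lower level. -/
theorem one_add_mul_add_mul_le {p q r a : ℝ≥0∞} (hqr : q + r ≤ 1) (hpq : p ≤ q) :
    1 + (q * a + r * (a + p⁻¹)) ≤ a + p⁻¹ := by
  rcases eq_or_ne p 0 with rfl | hp
  · simp
  have hp_top : p ≠ ⊤ := ne_top_of_le_ne_top ENNReal.one_ne_top (hpq.trans (le_self_add.trans hqr))
  have hone : 1 ≤ q * p⁻¹ :=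
    (ENNReal.mul_inv_cancel hp hp_top).symm.le.trans (mul_le_mul_left hpq _)
  calc 1 + (q * a + r * (a + p⁻¹)) ≤ q * p⁻¹ + (q * a + r * (a + p⁻¹)) := by gcongr
    _ = (q + r) * (a + p⁻¹) := by ring
    _ ≤ a + p⁻¹ := mul_le_of_le_one_left zero_le hqr

theorem sum_range_survive_le_of_levels (I : S → Prop) (φ : S → ℕ) (p : ℕ → ℝ≥0∞)
    (hmass : ∀ x, I x → ∑' y, K x y ≤ 1)
    (hclosed : ∀ x y, I x → K x y ≠ 0 → I y ∧ φ y ≤ φ x)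
    (hzero : ∀ x, I x → φ x = 0 → A x)
    (hdec : ∀ x, I x → ¬A x → p (φ x) ≤ ∑' y, if φ y < φ x then K x y else 0) (T : ℕ) :
    ∀ x, I x → ∑ t ∈ Finset.range T, survive K A t x ≤
      ∑ j ∈ Finset.range (φ x), (p (j + 1))⁻¹ := by
  set g : ℕ → ℝ≥0∞ := fun u => ∑ j ∈ Finset.range u, (p (j + 1))⁻¹
  have hg : Monotone g := fun a b hab =>
    Finset.sum_le_sum_of_subset (Finset.range_subset_range.2 hab)
  induction T with
  | zero => simp
  | succ T ih =>
    intro x hx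
    by_cases hA : A x
    · cases T <;> simp [Finset.sum_range_succ', survive, hA]
    obtain ⟨u, hu⟩ : ∃ u, φ x = u + 1 :=
      Nat.exists_eq_add_one_of_ne_zero fun h => hA (hzero x hx h)
    set q := ∑' y, if φ y < φ x then K x y else 0
    set r := ∑' y, if φ y < φ x then 0 else K x y
    have hqr : q + r ≤ 1 := by
      rw [← ENNReal.tsum_add]
      refine le_of_eq_of_le (tsum_congr fun y => ?_) (hmass x hx)
      split_ifs <;> simp
    have hstep : ∀ y, K x y * ∑ t ∈ Finset.range T, survive K A t y ≤
        (if φ y < φ x then K x y else 0) * g u +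
          (if φ y < φ x then 0 else K x y) * (g u + (p (u + 1))⁻¹) := by
      intro y
      rcases eq_or_ne (K x y) 0 with hK | hK
      · simp [hK]
      obtain ⟨hy, hφ⟩ := hclosed x y hx hK
      have hS := ih y hy
      split_ifs with hlt
      · simpa using mul_le_mul_right (hS.trans (hg (by omega))) _
      · simpa [g, hu, Finset.sum_range_succ] using mul_le_mul_right (hS.trans (hg hφ)) _
    calc ∑ t ∈ Finset.range (T + 1), survive K A t x
        = 1 + ∑' y, K x y * ∑ t ∈ Finset.range T, survive K A t y :=
          sum_range_succ_survive_of_not hA T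
      _ ≤ 1 + (q * g u + r * (g u + (p (u + 1))⁻¹)) := by
          gcongr
          refine (ENNReal.tsum_le_tsum hstep).trans_eq ?_
          rw [ENNReal.tsum_add, ENNReal.tsum_mul_right, ENNReal.tsum_mul_right]
      _ ≤ g u + (p (u + 1))⁻¹ := one_add_mul_add_mul_le hqr (hu ▸ hdec x hx hA)
      _ = g (φ x) := by simp [g, hu, Finset.sum_range_succ]

/-- The fitness-level method. -/
theorem hitTime_le_of_levels (I : S → Prop) (φ : S → ℕ) (p : ℕ → ℝ≥0∞)
    (hmass : ∀ x, I x → ∑' y, K x y ≤ 1)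
    (hclosed : ∀ x y, I x → K x y ≠ 0 → I y ∧ φ y ≤ φ x)
    (hzero : ∀ x, I x → φ x = 0 → A x)
    (hdec : ∀ x, I x → ¬A x → p (φ x) ≤ ∑' y, if φ y < φ x then K x y else 0) (hx : I x) :
    hitTime K A x ≤ ∑ j ∈ Finset.range (φ x), (p (j + 1))⁻¹ :=
  ENNReal.tsum_le_of_sum_range_le fun T =>
    sum_range_survive_le_of_levels I φ p hmass hclosed hzero hdec T x hx

end FitnessLevels

theorem sum_range_inv_div_eq_ofReal_harmonic (N u : ℕ) :
    ∑ j ∈ Finset.range u, (((j + 1 : ℕ) : ℝ≥0∞) / N)⁻¹ = ENNReal.ofReal (N * harmonic u) := by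
  have hterm : ∀ j : ℕ, (((j + 1 : ℕ) : ℝ≥0∞) / N)⁻¹ = ENNReal.ofReal (N / (j + 1 : ℕ)) := by
    intro j
    rw [ENNReal.inv_div (.inl (ENNReal.natCast_ne_top _)) (.inr (by simp)),
      ENNReal.ofReal_div_of_pos (by positivity), ENNReal.ofReal_natCast, ENNReal.ofReal_natCast]
  simp_rw [hterm, harmonic, Rat.cast_sum, Finset.mul_sum]
  rw [ENNReal.ofReal_sum_of_nonneg fun j _ => by positivity]
  simp [div_eq_mul_inv]

theorem four_mul_harmonic_le_eight_mul_log {m : ℕ} (hm : 3 ≤ m) :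
    4 * (m : ℝ) * harmonic m ≤ 8 * m * Real.log m := by
  have hlog : 1 ≤ Real.log m :=
    (Real.log_three_gt_d9.trans_le' (by norm_num)).le.trans
      (Real.log_le_log (by norm_num) (by exact_mod_cast hm))
  have := harmonic_le_one_add_log m
  have : (0 : ℝ) ≤ m := m.cast_nonneg
  nlinarith

theorem one_add_inv_pow_le_four (k : ℕ) : (1 + (k : ℝ)⁻¹) ^ k ≤ 4 :=
  calc (1 + (k : ℝ)⁻¹) ^ k ≤ Real.exp (k : ℝ)⁻¹ ^ k := by
        gcongr
        linarith [Real.add_one_le_exp (k : ℝ)⁻¹]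
    _ ≤ Real.exp 1 := by
        rw [← Real.exp_nat_mul]
        exact Real.exp_le_exp.2 mul_inv_le_one
    _ ≤ 4 := by linarith [Real.exp_one_lt_d9]

theorem inv_four_le_one_sub_inv_pow (k : ℕ) : (4 : ℝ)⁻¹ ≤ (1 - ((k + 1 : ℕ) : ℝ)⁻¹) ^ k := by
  rcases k.eq_zero_or_pos with rfl | hk
  · norm_num
  have hbase : 1 - ((k + 1 : ℕ) : ℝ)⁻¹ = (1 + (k : ℝ)⁻¹)⁻¹ := by
    push_cast
    field_simp
    ring
  rw [hbase, inv_pow]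
  exact inv_anti₀ (by positivity) (one_add_inv_pow_le_four k)

section Mutation

variable {S : Type*} (pm : S → S → ℝ≥0∞) (accept : S → S → Prop)

theorem tsum_eaKernel (x : S) : ∑' y, eaKernel pm accept x y = ∑' z, pm x z := by
  simp only [eaKernel]
  rw [ENNReal.tsum_comm]
  refine tsum_congr fun z => ?_
  rw [tsum_eq_single (if accept x z then z else x) fun y hy => if_neg (Ne.symm hy), if_pos rfl]

theorem eq_or_accept_of_eaKernel_ne_zero {x y : S} (h : eaKernel pm accept x y ≠ 0) :
    y = x ∨ accept x y := by
  obtain ⟨z, hz⟩ : ∃ z, (if (if accept x z then z else x) = y then pm x z else 0) ≠ 0 := by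
    simpa [eaKernel, ENNReal.tsum_eq_zero] using h
  by_cases ha : accept x z <;> simp_all

theorem le_eaKernel_of_accept {x y : S} (h : accept x y) : pm x y ≤ eaKernel pm accept x y :=
  le_of_eq_of_le (by simp [h]) (ENNReal.le_tsum y)

variable {α : Type*} [Fintype α] [DecidableEq α]

theorem pmutEAg_eq_prod (x y : α → Bool) :
    pmutEAg x y = ∏ i, if x i = y i then 1 - (Fintype.card α : ℝ≥0∞)⁻¹
      else (Fintype.card α : ℝ≥0∞)⁻¹ := by
  rw [Finset.prod_ite, Finset.prod_const, Finset.prod_const, pmutEAg, mul_comm, hammingDist,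
    ← Finset.card_univ, ← Finset.card_filter_add_card_filter_not (s := Finset.univ)
      (fun i => x i = y i)]
  simp only [ne_eq, Nat.add_sub_cancel]

theorem tsum_pmutEAg (x : α → Bool) : ∑' y, pmutEAg x y = 1 := by
  simp_rw [tsum_fintype, pmutEAg_eq_prod, ← Fintype.prod_sum (fun i (b : Bool) =>
    if x i = b then 1 - (Fintype.card α : ℝ≥0∞)⁻¹ else (Fintype.card α : ℝ≥0∞)⁻¹)]
  refine Finset.prod_eq_one fun i _ => ?_
  have : (Fintype.card α : ℝ≥0∞)⁻¹ ≤ 1 :=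
    ENNReal.inv_le_one.2 (by exact_mod_cast Fintype.card_pos_iff.2 ⟨i⟩)
  cases x i <;> simp [tsub_add_cancel_of_le this, add_tsub_cancel_of_le this]

theorem inv_four_mul_card_le_pmutEAg {x y : α → Bool} (h : hammingDist x y = 1) :
    (4 * Fintype.card α : ℝ≥0∞)⁻¹ ≤ pmutEAg x y := by
  obtain ⟨k, hk⟩ : ∃ k, Fintype.card α = k + 1 :=
    Nat.exists_eq_add_one.2 (h.symm.trans_le hammingDist_le_card_fintype)
  have hreal : ENNReal.ofReal (4 : ℝ)⁻¹ ≤ (1 - ((k + 1 : ℕ) : ℝ≥0∞)⁻¹) ^ k := by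
    calc ENNReal.ofReal (4 : ℝ)⁻¹ ≤ ENNReal.ofReal ((1 - ((k + 1 : ℕ) : ℝ)⁻¹) ^ k) :=
          ENNReal.ofReal_le_ofReal (inv_four_le_one_sub_inv_pow k)
      _ = (1 - ((k + 1 : ℕ) : ℝ≥0∞)⁻¹) ^ k := by
          rw [ENNReal.ofReal_pow (sub_nonneg.2 (inv_le_one_of_one_le₀ (by simp))),
            ENNReal.ofReal_sub _ (by positivity), ENNReal.ofReal_one,
            ENNReal.ofReal_inv_of_pos (by positivity), ENNReal.ofReal_natCast]
  rw [pmutEAg, h, hk, pow_one, Nat.add_sub_cancel_right, ENNReal.mul_inv (by simp) (by simp),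
    mul_comm]
  gcongr
  simpa [ENNReal.ofReal_inv_of_pos] using hreal

end Mutation

theorem hammingDist_update_of_ne {ι β : Type*} [Fintype ι] [DecidableEq ι] [DecidableEq β]
    {x : ι → β} {i : ι} {b : β} (h : x i ≠ b) : hammingDist x (Function.update x i b) = 1 := by
  rw [hammingDist, Finset.card_eq_one]
  refine ⟨i, Finset.eq_singleton_iff_unique_mem.2 ⟨by simpa using h, fun j hj => ?_⟩⟩
  by_contra hji
  simp [Function.update_of_ne hji] at hj

omit [Fintype V] [DecidableEq V] in
theorem IsMatchingSet.mono {s t : Finset (Sym2 V)} (ht : IsMatchingSet t) (hst : s ⊆ t) :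
    IsMatchingSet s :=
  fun e he e' he' => ht e (hst he) e' (hst he')

omit [Fintype V] in
theorem IsMatchingSet.insert {s : Finset (Sym2 V)} {e : Sym2 V} (hs : IsMatchingSet s)
    (he : ∀ e' ∈ s, ∀ v ∈ e, v ∉ e') : IsMatchingSet (insert e s) := by
  intro a ha b hb hab v hv
  rw [Finset.mem_insert] at ha hb
  rcases ha with rfl | ha <;> rcases hb with rfl | hb
  · exact hab rfl
  · exact he b hb v hv.1 hv.2
  · exact he a ha v hv.2 hv.1
  · exact hs a ha b hb hab v hv

theorem card_le_card_of_isVertexCover {G : SimpleGraph V} [DecidableRel G.Adj]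
    {s : Finset (Sym2 V)} {C : Finset V} (hs : IsMatchingSet s) (hsG : s ⊆ G.edgeFinset)
    (hC : IsVertexCover G C) : #s ≤ #C := by
  refine Finset.card_le_card_of_forall_subsingleton (fun e v => v ∈ e)
    (fun e he => hC e (hsG he)) fun v _ e he e' he' => ?_
  by_contra hne
  exact hs e he.1 e' he'.1 hne v ⟨he.2, he'.2⟩

section EdgeBased

def uncoveredEdges (G : SimpleGraph V) [DecidableRel G.Adj] (x : G.edgeFinset → Bool) :
    Finset (Sym2 V) :=
  G.edgeFinset.filter fun e => ¬∃ v ∈ coverSet G x, v ∈ e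

def collidingPairs (G : SimpleGraph V) [DecidableRel G.Adj] (x : G.edgeFinset → Bool) :
    Finset (Sym2 V × Sym2 V) :=
  (chosenE G x ×ˢ chosenE G x).filter fun p => p.1 ≠ p.2 ∧ ∃ v : V, v ∈ p.1 ∧ v ∈ p.2

theorem fVC_eq (G : SimpleGraph V) [DecidableRel G.Adj] (x : G.edgeFinset → Bool) :
    fVC G x = #(coverSet G x) + (Fintype.card V + 1) * #(uncoveredEdges G x) +
      (Fintype.card V + 1) * (#G.edgeFinset + 1) * #(collidingPairs G x) := rfl

variable {G : SimpleGraph V} [DecidableRel G.Adj] {x y : G.edgeFinset → Bool}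

theorem mem_chosenE (i : G.edgeFinset) : (i : Sym2 V) ∈ chosenE G x ↔ x i = true := by
  simp [chosenE]

theorem chosenE_subset_edgeFinset : chosenE G x ⊆ G.edgeFinset := by
  intro e
  simp only [chosenE, Finset.mem_image]
  rintro ⟨i, -, rfl⟩
  exact i.2

theorem chosenE_update_true (i : G.edgeFinset) :
    chosenE G (Function.update x i true) = insert (i : Sym2 V) (chosenE G x) := by
  ext e
  simp only [chosenE, Finset.mem_image, Finset.mem_filter, Finset.mem_univ, true_and,
    Finset.mem_insert, Function.update_apply]
  aesop

theorem mem_coverSet {v : V} : v ∈ coverSet G x ↔ ∃ e ∈ chosenE G x, v ∈ e := by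
  simp [coverSet]

theorem coverSet_eq_biUnion : coverSet G x = (chosenE G x).biUnion Sym2.toFinset := by
  ext v
  simp [mem_coverSet]

theorem card_coverSet_le_two_mul_card_chosenE : #(coverSet G x) ≤ 2 * #(chosenE G x) := by
  rw [coverSet_eq_biUnion, mul_comm]
  exact Finset.card_biUnion_le_card_mul _ _ _ fun e _ => by
    rw [Sym2.card_toFinset]; split_ifs <;> simp

theorem card_coverSet_update_true_le (i : G.edgeFinset) :
    #(coverSet G (Function.update x i true)) ≤ #(coverSet G x) + 2 := by
  rw [coverSet_eq_biUnion, coverSet_eq_biUnion, chosenE_update_true, Finset.biUnion_insert,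
    add_comm]
  refine (Finset.card_union_le _ _).trans (Nat.add_le_add_right ?_ _)
  rw [Sym2.card_toFinset]; split_ifs <;> simp

theorem card_coverSet_le : #(coverSet G x) ≤ Fintype.card V :=
  Finset.card_le_univ _

theorem card_uncoveredEdges_le : #(uncoveredEdges G x) ≤ #G.edgeFinset :=
  Finset.card_filter_le _ _

theorem mem_uncoveredEdges {e : Sym2 V} :
    e ∈ uncoveredEdges G x ↔ e ∈ G.edgeFinset ∧ ∀ e' ∈ chosenE G x, ∀ v ∈ e, v ∉ e' := by
  simp only [uncoveredEdges, Finset.mem_filter, mem_coverSet]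
  refine and_congr_right fun _ => ⟨fun h e' he' v hv hv' => h ⟨v, ⟨e', he', hv'⟩, hv⟩, ?_⟩
  rintro h ⟨v, ⟨e', he', hv'⟩, hv⟩
  exact h e' he' v hv hv'

theorem collidingPairs_eq_empty_iff : collidingPairs G x = ∅ ↔ IsMatchingSet (chosenE G x) := by
  simp only [collidingPairs, Finset.filter_eq_empty_iff, Finset.mem_product, IsMatchingSet,
    Prod.forall, not_and, not_exists, and_imp]
  exact ⟨fun h e he e' he' hne => h e e' he he' hne, fun h e e' he he' => h e he e' he'⟩

theorem fVC_eq_of_isMatchingSet (hx : IsMatchingSet (chosenE G x)) :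
    fVC G x = #(coverSet G x) + (Fintype.card V + 1) * #(uncoveredEdges G x) := by
  rw [fVC_eq, collidingPairs_eq_empty_iff.2 hx, Finset.card_empty, mul_zero, add_zero]

/-- The penalty weights make `f_e` lexicographic: collisions first, then uncovered edges, then
the size of the cover. -/
theorem fVC_lt_of_isMatchingSet (hx : IsMatchingSet (chosenE G x)) :
    fVC G x < (Fintype.card V + 1) * (#G.edgeFinset + 1) := by
  rw [fVC_eq_of_isMatchingSet hx]
  have := card_coverSet_le (x := x)
  have := card_uncoveredEdges_le (x := x)
  nlinarith

theorem isMatchingSet_of_fVC_le (hx : IsMatchingSet (chosenE G x)) (h : fVC G y ≤ fVC G x) :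
    IsMatchingSet (chosenE G y) := by
  rw [← collidingPairs_eq_empty_iff, ← Finset.card_eq_zero]
  by_contra hy
  have := fVC_lt_of_isMatchingSet hx
  rw [fVC_eq] at h
  nlinarith [Nat.one_le_iff_ne_zero.2 hy]

theorem card_uncoveredEdges_le_of_fVC_le (hx : IsMatchingSet (chosenE G x))
    (h : fVC G y ≤ fVC G x) : #(uncoveredEdges G y) ≤ #(uncoveredEdges G x) := by
  have hy := isMatchingSet_of_fVC_le hx h
  rw [fVC_eq_of_isMatchingSet hx, fVC_eq_of_isMatchingSet hy] at h
  have := card_coverSet_le (x := x)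
  by_contra! hlt
  nlinarith

theorem eq_false_of_mem_uncoveredEdges {i : G.edgeFinset} (hi : ↑i ∈ uncoveredEdges G x) :
    x i = false := by
  obtain ⟨v, hv⟩ : ∃ v, v ∈ (i : Sym2 V) := ⟨_, Sym2.out_fst_mem _⟩
  by_contra h
  exact (mem_uncoveredEdges.1 hi).2 i ((mem_chosenE i).2 (by simpa using h)) v hv hv

theorem uncoveredEdges_update_true_subset (i : G.edgeFinset) :
    uncoveredEdges G (Function.update x i true) ⊆ (uncoveredEdges G x).erase i := by
  intro e he
  simp only [mem_uncoveredEdges, chosenE_update_true, Finset.forall_mem_insert] at he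
  obtain ⟨v, hv⟩ : ∃ v, v ∈ e := ⟨_, Sym2.out_fst_mem _⟩
  refine Finset.mem_erase.2 ⟨?_, mem_uncoveredEdges.2 ⟨he.1, he.2.2⟩⟩
  rintro rfl
  exact he.2.1 v hv hv

theorem isMatchingSet_update_true (hx : IsMatchingSet (chosenE G x)) {i : G.edgeFinset}
    (hi : ↑i ∈ uncoveredEdges G x) : IsMatchingSet (chosenE G (Function.update x i true)) := by
  rw [chosenE_update_true]
  exact hx.insert (mem_uncoveredEdges.1 hi).2

theorem card_uncoveredEdges_update_true_lt {i : G.edgeFinset} (hi : ↑i ∈ uncoveredEdges G x) :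
    #(uncoveredEdges G (Function.update x i true)) < #(uncoveredEdges G x) :=
  (Finset.card_le_card (uncoveredEdges_update_true_subset i)).trans_lt
    (Finset.card_erase_lt_of_mem hi)

/-- Covering one more edge removes a penalty of `|V| + 1` and adds at most two cover vertices. -/
theorem fVC_update_true_le (hx : IsMatchingSet (chosenE G x)) {i : G.edgeFinset}
    (hi : ↑i ∈ uncoveredEdges G x) : fVC G (Function.update x i true) ≤ fVC G x := by
  rw [fVC_eq_of_isMatchingSet hx, fVC_eq_of_isMatchingSet (isMatchingSet_update_true hx hi)]
  have := card_coverSet_update_true_le (x := x) i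
  have := card_uncoveredEdges_update_true_lt hi
  have : 1 ≤ Fintype.card V := Fintype.card_pos_iff.2 ⟨(i : Sym2 V).out.1⟩
  nlinarith

theorem isMaximalMatchingOf_chosenE_iff :
    IsMaximalMatchingOf G (chosenE G x) ↔
      IsMatchingSet (chosenE G x) ∧ uncoveredEdges G x = ∅ := by
  simp only [IsMaximalMatchingOf, chosenE_subset_edgeFinset, true_and,
    Finset.eq_empty_iff_forall_notMem, mem_uncoveredEdges]
  refine and_congr_right fun _ => forall_congr' fun e => ?_
  aesop

theorem IsMaximalMatchingOf.isVertexCover_coverSet (h : IsMaximalMatchingOf G (chosenE G x)) :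
    IsVertexCover G (coverSet G x) := fun e he => by
  obtain ⟨e', he', v, hv, hv'⟩ := h.2.2 e he
  exact ⟨v, mem_coverSet.2 ⟨e', he', hv'⟩, hv⟩

theorem IsMaximalMatchingOf.card_coverSet_le_two_mul (h : IsMaximalMatchingOf G (chosenE G x))
    {C : Finset V} (hC : IsVertexCover G C) : #(coverSet G x) ≤ 2 * #C :=
  card_coverSet_le_two_mul_card_chosenE.trans
    (Nat.mul_le_mul_left 2 (card_le_card_of_isVertexCover h.2.1 h.1 hC))

variable (G) in
abbrev edgeKernel : (G.edgeFinset → Bool) → (G.edgeFinset → Bool) → ℝ≥0∞ :=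
  eaKernel pmutEAg fun x z => fVC G z ≤ fVC G x

/-- Each uncovered edge can be added by a single-bit flip, which the EA performs with
probability at least `1 / (4m)`. -/
theorem card_uncoveredEdges_div_le_tsum (hx : IsMatchingSet (chosenE G x)) :
    (#(uncoveredEdges G x) : ℝ≥0∞) / ((4 * #G.edgeFinset : ℕ) : ℝ≥0∞) ≤
      ∑' y, if #(uncoveredEdges G y) < #(uncoveredEdges G x) then edgeKernel G x y else 0 := by
  set U := (uncoveredEdges G x).subtype (· ∈ G.edgeFinset)
  have hU : #U = #(uncoveredEdges G x) := by
    rw [Finset.card_subtype, Finset.filter_true_of_mem fun e he => (mem_uncoveredEdges.1 he).1]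
  have hinj : Set.InjOn (fun i => Function.update x i true) U := by
    intro i hi j _ hij
    by_contra hne
    have := congrFun hij i
    simp only [Function.update_self, Function.update_of_ne hne] at this
    rw [eq_false_of_mem_uncoveredEdges (Finset.mem_subtype.1 hi)] at this
    exact Bool.false_ne_true this.symm
  calc (#(uncoveredEdges G x) : ℝ≥0∞) / ((4 * #G.edgeFinset : ℕ) : ℝ≥0∞)
      = ∑ y ∈ U.image (fun i => Function.update x i true), (4 * #G.edgeFinset : ℝ≥0∞)⁻¹ := by
        rw [Finset.sum_const, Finset.card_image_of_injOn hinj, hU, nsmul_eq_mul, div_eq_mul_inv]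
        push_cast
        rfl
    _ ≤ ∑ y ∈ U.image (fun i => Function.update x i true),
          if #(uncoveredEdges G y) < #(uncoveredEdges G x) then edgeKernel G x y else 0 := by
        refine Finset.sum_le_sum fun y hy => ?_
        obtain ⟨i, hi, rfl⟩ := Finset.mem_image.1 hy
        have hi := Finset.mem_subtype.1 hi
        rw [if_pos (card_uncoveredEdges_update_true_lt hi), ← Fintype.card_coe G.edgeFinset]
        exact (inv_four_mul_card_le_pmutEAg (hammingDist_update_of_ne (by
          simp [eq_false_of_mem_uncoveredEdges hi]))).trans
          (le_eaKernel_of_accept _ _ (fVC_update_true_le hx hi))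
    _ ≤ _ := ENNReal.sum_le_tsum _

theorem hitTime_edgeKernel_le {x₀ : G.edgeFinset → Bool} (hx₀ : IsMatchingSet (chosenE G x₀))
    {k : ℕ} (hk : #(uncoveredEdges G x₀) ≤ k) :
    hitTime (edgeKernel G) (fun x => IsMaximalMatchingOf G (chosenE G x)) x₀ ≤
      ENNReal.ofReal (4 * #G.edgeFinset * harmonic k) := by
  calc hitTime (edgeKernel G) (fun x => IsMaximalMatchingOf G (chosenE G x)) x₀
      ≤ ∑ j ∈ Finset.range #(uncoveredEdges G x₀),
          (((j + 1 : ℕ) : ℝ≥0∞) / ((4 * #G.edgeFinset : ℕ) : ℝ≥0∞))⁻¹ :=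
        hitTime_le_of_levels (fun x => IsMatchingSet (chosenE G x))
          (fun x => #(uncoveredEdges G x)) (fun u => (u : ℝ≥0∞) / ((4 * #G.edgeFinset : ℕ) : ℝ≥0∞))
          (fun x _ => ((tsum_eaKernel _ _ x).trans (tsum_pmutEAg x)).le)
          (fun x y hx hK => (eq_or_accept_of_eaKernel_ne_zero _ _ hK).elim
            (fun hyx => by subst hyx; exact ⟨hx, le_rfl⟩)
            fun h => ⟨isMatchingSet_of_fVC_le hx h, card_uncoveredEdges_le_of_fVC_le hx h⟩)
          (fun x hx h => isMaximalMatchingOf_chosenE_iff.2 ⟨hx, Finset.card_eq_zero.1 h⟩)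
          (fun x hx _ => card_uncoveredEdges_div_le_tsum hx) hx₀
    _ ≤ ∑ j ∈ Finset.range k, (((j + 1 : ℕ) : ℝ≥0∞) / ((4 * #G.edgeFinset : ℕ) : ℝ≥0∞))⁻¹ :=
        Finset.sum_le_sum_of_subset (Finset.range_subset_range.2 hk)
    _ = ENNReal.ofReal (4 * #G.edgeFinset * harmonic k) := by
        rw [sum_range_inv_div_eq_ofReal_harmonic]
        push_cast
        rfl

end EdgeBased

theorem card_uncoveredEdges_le_one_of_insert {G G' : SimpleGraph V} [DecidableRel G.Adj]
    [DecidableRel G'.Adj] {e : Sym2 V} (hG' : G'.edgeFinset = insert e G.edgeFinset)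
    {x : G'.edgeFinset → Bool} (hx : IsMaximalMatchingOf G (chosenE G' x)) :
    #(uncoveredEdges G' x) ≤ 1 := by
  refine (Finset.card_le_card fun e' he' => ?_).trans (Finset.card_singleton e).le
  obtain ⟨he'G', hunc⟩ := mem_uncoveredEdges.1 he'
  rcases Finset.mem_insert.1 (hG' ▸ he'G') with rfl | he'G
  · exact Finset.mem_singleton_self _
  · obtain ⟨f, hf, v, hve', hvf⟩ := hx.2.2 e' he'G
    exact absurd hvf (hunc f hf v hve')

/-- For the dynamic vertex cover problem, the (1+1) EA with the edge-based
representation and fitness `f_e`, started from a maximal matching of the old instance, finds a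
maximal matching of the new instance — inducing a 2-approximate vertex cover — in expected
time `O(m)` after a dynamic addition of an edge, and in expected time `O(m log m)` after a
dynamic deletion of an edge. -/
theorem stmt_11 :
    ∃ c : ℝ, 0 < c ∧ ∃ m₀ : ℕ,
      ∀ (V : Type) (_ : Fintype V) (_ : DecidableEq V)
        (G G' : SimpleGraph V) (_ : DecidableRel G.Adj) (_ : DecidableRel G'.Adj)
        (e : Sym2 V) (x₀ : G'.edgeFinset → Bool),
        m₀ ≤ G'.edgeFinset.card →
          ((G'.edgeFinset = insert e G.edgeFinset ∧ e ∉ G.edgeFinset ∧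
              IsMaximalMatchingOf G (chosenE G' x₀) →
            hitTime (eaKernel pmutEAg fun x z => fVC G' z ≤ fVC G' x)
                (fun x => IsMaximalMatchingOf G' (chosenE G' x)) x₀ ≤
              ENNReal.ofReal (c * G'.edgeFinset.card)) ∧
           (G.edgeFinset = insert e G'.edgeFinset ∧ e ∉ G'.edgeFinset ∧
              (∃ M : Finset (Sym2 V), IsMaximalMatchingOf G M ∧ chosenE G' x₀ = M.erase e) →
            hitTime (eaKernel pmutEAg fun x z => fVC G' z ≤ fVC G' x)
                (fun x => IsMaximalMatchingOf G' (chosenE G' x)) x₀ ≤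
              ENNReal.ofReal
                (c * G'.edgeFinset.card * Real.log (G'.edgeFinset.card : ℝ))) ∧
           (∀ x : G'.edgeFinset → Bool, IsMaximalMatchingOf G' (chosenE G' x) →
              IsVertexCover G' (coverSet G' x) ∧
                ∀ C : Finset V, IsVertexCover G' C →
                  (coverSet G' x).card ≤ 2 * C.card)) := by
  refine ⟨8, by norm_num, 3, fun V _ _ G G' _ _ e x₀ hm => ⟨?_, ?_, fun x hx =>
    ⟨hx.isVertexCover_coverSet, fun C hC => hx.card_coverSet_le_two_mul hC⟩⟩⟩
  · rintro ⟨hG', -, hx₀⟩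
    refine (hitTime_edgeKernel_le hx₀.2.1 (card_uncoveredEdges_le_one_of_insert hG' hx₀)).trans
      (ENNReal.ofReal_le_ofReal ?_)
    norm_num
    gcongr
    norm_num
  · rintro ⟨-, -, M, hM, hx₀⟩
    refine (hitTime_edgeKernel_le (hx₀ ▸ hM.2.1.mono (M.erase_subset e))
      card_uncoveredEdges_le).trans (ENNReal.ofReal_le_ofReal ?_)
    exact four_mul_harmonic_le_eight_mul_log hm
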